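/- arXiv:2008.03819 — 5 statements merged into one kernel-verified Lean document; each statement's English description precedes it below -/
import Mathlib

section
/- Let C be a pointed, spanning polyhedral cone in E = ℝⁿ and let σ be a face of C. Then σ° + C = ⋃_{σ'} σ'°, where the union runs over all faces σ' of C with σ ⊆ σ'; that is, the Minkowski sum of the relative interior of σ with C equals the union of the relative interiors of the faces of C containing σ. -/
open Pointwise

/-- A polyhedral cone in `ℝⁿ`: an intersection of finitely many closed linear half-spaces. -/
def IsPolyCone {n : ℕ} (C : Set (Fin n → ℝ)) : Prop :=
  ∃ (m : ℕ) (ℓ : Fin m → ((Fin n → ℝ) →ₗ[ℝ] ℝ)), C = {x | ∀ i, 0 ≤ ℓ i x}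

/-- A face of a cone `C`: a subset of `C` containing `0`, closed under addition, and such
that whenever `x, y ∈ C` and `x + y` lies in the subset, both `x` and `y` do. -/
def IsConeFace {M : Type*} [AddCommMonoid M] (σ C : Set M) : Prop :=
  σ ⊆ C ∧ (0 : M) ∈ σ ∧ (∀ x ∈ σ, ∀ y ∈ σ, x + y ∈ σ) ∧
    ∀ x ∈ C, ∀ y ∈ C, x + y ∈ σ → x ∈ σ ∧ y ∈ σ

/-- A downset for the partial order `x ≼ y ↔ y - x ∈ C`. -/
def IsDownset {n : ℕ} (C D : Set (Fin n → ℝ)) : Prop :=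
  ∀ x y : Fin n → ℝ, y ∈ D → y - x ∈ C → x ∈ D

/-- The upper boundary downset `D^σ = {a | a - σ° ⊆ D}`. -/
def upSet {n : ℕ} (D σ : Set (Fin n → ℝ)) : Set (Fin n → ℝ) :=
  {a | ∀ s ∈ intrinsicInterior ℝ σ, a - s ∈ D}

/-- `a` is a cogenerator of the downset `D` along the face `τ` with nadir `σ`:
`(a + C) ∩ D^σ = a + τ` and no face `σ''` with `τ ⊆ σ'' ⊊ σ` satisfies `a - σ''° ⊆ D`. -/
def IsCogen {n : ℕ} (C D τ σ : Set (Fin n → ℝ)) (a : Fin n → ℝ) : Prop :=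
  (({a} + C) ∩ upSet D σ = {a} + τ) ∧
  ∀ σ'' : Set (Fin n → ℝ), IsConeFace σ'' C → τ ⊆ σ'' → σ'' ⊂ σ →
    ¬ (∀ s ∈ intrinsicInterior ℝ σ'', a - s ∈ D)

/-- A `σ`-vicinity of a point `p` of `E ⧸ span τ`: the image under the quotient map of
`u + σ° + C` for some `u` admitting a representative `w` of `p` with `w - u ∈ σ°`. -/
def IsVic {n : ℕ} (C σ τ : Set (Fin n → ℝ))
    (p : (Fin n → ℝ) ⧸ Submodule.span ℝ τ)
    (V : Set ((Fin n → ℝ) ⧸ Submodule.span ℝ τ)) : Prop :=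
  ∃ u w : Fin n → ℝ, (Submodule.span ℝ τ).mkQ w = p ∧
    w - u ∈ intrinsicInterior ℝ σ ∧
    V = (Submodule.span ℝ τ).mkQ '' ({u} + intrinsicInterior ℝ σ + C)

/-! For `a ∈ σ°` and `b ∈ C`, the point `a + b` lies in the relative interior of the face of `C`
cut out by the inequalities `ℓ i ≥ 0` that are tight at `a + b`; this face contains `σ` because
an inequality tight at `a` is tight on all of `σ`. Conversely, if `x ∈ σ'°` for a face `σ' ⊇ σ`
and `s ∈ σ°`, then `x - ε • s` stays in `σ' ⊆ C` for small `ε > 0`, and `ε • s ∈ σ°`. -/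

open Set Filter Topology

section IntrinsicInterior

variable {E : Type*} [AddCommGroup E] [Module ℝ E] [TopologicalSpace E]

theorem mem_intrinsicInterior_of_inter_subset {S U : Set E} {x : E} (L : AffineSubspace ℝ E)
    (hSL : S ⊆ L) (hU : IsOpen U) (hLU : (L : Set E) ∩ U ⊆ S) (hxS : x ∈ S) (hxU : x ∈ U) :
    x ∈ intrinsicInterior ℝ S := by
  refine mem_intrinsicInterior.mpr ⟨⟨x, subset_affineSpan ℝ S hxS⟩, ?_, rfl⟩
  exact mem_interior.mpr ⟨Subtype.val ⁻¹' U, fun y hy => hLU ⟨affineSpan_le.mpr hSL y.2, hy⟩,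
    hU.preimage continuous_subtype_val, hxU⟩

variable [IsTopologicalAddGroup E] [ContinuousSMul ℝ E]

theorem exists_pos_sub_smul_mem_of_mem_intrinsicInterior {S : Set E} {x y : E}
    (hx : x ∈ intrinsicInterior ℝ S) (h0 : 0 ∈ S) (hy : y ∈ S) :
    ∃ ε : ℝ, 0 < ε ∧ x - ε • y ∈ S := by
  obtain ⟨x', hx', rfl⟩ := mem_intrinsicInterior.mp hx
  have hdir : -y ∈ (affineSpan ℝ S).direction := by
    simpa using AffineSubspace.vsub_mem_direction (subset_affineSpan ℝ S h0)
      (subset_affineSpan ℝ S hy)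
  let path : ℝ → affineSpan ℝ S := fun t =>
    ⟨t • -y + x', AffineSubspace.vadd_mem_of_mem_direction (Submodule.smul_mem _ t hdir) x'.2⟩
  have hpath : Continuous path := by fun_prop
  have hnear : ∀ᶠ t in 𝓝 (0 : ℝ), path t ∈ interior ((↑) ⁻¹' S) :=
    hpath.continuousAt.preimage_mem_nhds (isOpen_interior.mem_nhds (by simpa [path] using hx'))
  obtain ⟨ε, hε, hεpos⟩ :=
    ((hnear.filter_mono nhdsWithin_le_nhds).and self_mem_nhdsWithin :
      ∀ᶠ t in 𝓝[>] (0 : ℝ), _ ∧ 0 < t).exists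
  refine ⟨ε, hεpos, ?_⟩
  simpa [path, sub_eq_add_neg, add_comm] using interior_subset hε

theorem eq_zero_of_mem_intrinsicInterior {S : Set E} {f : E →ₗ[ℝ] ℝ} {a y : E}
    (hf : ∀ z ∈ S, 0 ≤ f z) (h0 : 0 ∈ S) (ha : a ∈ intrinsicInterior ℝ S) (hfa : f a = 0)
    (hy : y ∈ S) : f y = 0 := by
  obtain ⟨ε, hε, hmem⟩ := exists_pos_sub_smul_mem_of_mem_intrinsicInterior ha h0 hy
  have := hf _ hmem
  simp only [map_sub, map_smul, hfa, smul_eq_mul, zero_sub, neg_nonneg] at this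
  exact le_antisymm (nonpos_of_mul_nonpos_right this hε) (hf y hy)

end IntrinsicInterior

theorem IsConeFace.nsmul_mem {M : Type*} [AddCommMonoid M] {σ C : Set M} (hσ : IsConeFace σ C)
    {x : M} (hx : x ∈ σ) (k : ℕ) : k • x ∈ σ := by
  induction k with
  | zero => simpa using hσ.2.1
  | succ k ih => rw [succ_nsmul]; exact hσ.2.2.1 _ ih _ hx

section Cone

variable {E : Type*} [AddCommGroup E] [Module ℝ E]

/-- Faces of a cone are cones: `t • x` is a summand of `k • x ∈ σ` for any integer `k > t`. -/
theorem IsConeFace.smul_mem {σ C : Set E} (hC : ∀ t : ℝ, 0 < t → ∀ x ∈ C, t • x ∈ C)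
    (hσ : IsConeFace σ C) {t : ℝ} (ht : 0 ≤ t) {x : E} (hx : x ∈ σ) : t • x ∈ σ := by
  rcases ht.eq_or_lt with rfl | ht
  · simpa using hσ.2.1
  obtain ⟨k, hk⟩ := exists_nat_gt t
  have hsum : t • x + (k - t) • x = k • x := by
    rw [← add_smul, add_sub_cancel, Nat.cast_smul_eq_nsmul]
  refine (hσ.2.2.2 _ (hC t ht x (hσ.1 hx)) _ (hC _ (sub_pos.2 hk) x (hσ.1 hx)) ?_).1
  exact hsum ▸ hσ.nsmul_mem hx k

theorem IsConeFace.convex {σ C : Set E} (hC : ∀ t : ℝ, 0 < t → ∀ x ∈ C, t • x ∈ C)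
    (hσ : IsConeFace σ C) : Convex ℝ σ :=
  fun _ hx _ hy _ _ ha hb _ => hσ.2.2.1 _ (hσ.smul_mem hC ha hx) _ (hσ.smul_mem hC hb hy)

end Cone

section FiniteDimensional

variable {E : Type*} [NormedAddCommGroup E] [NormedSpace ℝ E] [FiniteDimensional ℝ E]

theorem smul_mem_intrinsicInterior_of_smul_mem {S : Set E}
    (hS : ∀ t : ℝ, 0 < t → ∀ x ∈ S, t • x ∈ S) {t : ℝ} (ht : 0 < t) {x : E}
    (hx : x ∈ intrinsicInterior ℝ S) : t • x ∈ intrinsicInterior ℝ S := by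
  let φ : E ≃ᵃ[ℝ] E := (LinearEquiv.smulOfNeZero ℝ E t ht.ne').toAffineEquiv
  have himage : φ '' S = S := by
    refine Subset.antisymm (image_subset_iff.2 fun y hy => hS t ht y hy) fun y hy => ?_
    refine ⟨t⁻¹ • y, hS _ (inv_pos.2 ht) y hy, ?_⟩
    simp [φ, smul_smul, ht.ne']
  rw [← himage, AffineEquiv.intrinsicInterior_image]
  exact ⟨x, hx, rfl⟩

theorem intrinsicInterior_subset_intrinsicInterior_add {σ σ' C : Set E}
    (hC : ∀ t : ℝ, 0 < t → ∀ x ∈ C, t • x ∈ C) (hσ : IsConeFace σ C) (hσσ' : σ ⊆ σ')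
    (hσ'C : σ' ⊆ C) : intrinsicInterior ℝ σ' ⊆ intrinsicInterior ℝ σ + C := by
  intro x hx
  obtain ⟨s, hs⟩ := (intrinsicInterior_nonempty (hσ.convex hC)).2 ⟨0, hσ.2.1⟩
  obtain ⟨ε, hε, hxε⟩ := exists_pos_sub_smul_mem_of_mem_intrinsicInterior hx (hσσ' hσ.2.1)
    (hσσ' (intrinsicInterior_subset hs))
  refine ⟨ε • s, ?_, x - ε • s, hσ'C hxε, add_sub_cancel _ _⟩
  exact smul_mem_intrinsicInterior_of_smul_mem (fun t ht y hy => hσ.smul_mem hC ht.le hy) hε hs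

end FiniteDimensional

namespace PolyCone

variable {E ι : Type*} [AddCommGroup E] [Module ℝ E] (ℓ : ι → E →ₗ[ℝ] ℝ)

/-- The smallest face of `{x | ∀ i, 0 ≤ ℓ i x}` containing `x` (when `x` lies in the cone). -/
def faceOf (x : E) : Set E := {y | (∀ i, 0 ≤ ℓ i y) ∧ ∀ i, ℓ i x = 0 → ℓ i y = 0}

theorem isConeFace_faceOf (x : E) : IsConeFace (faceOf ℓ x) {y | ∀ i, 0 ≤ ℓ i y} := by
  refine ⟨fun y hy => hy.1, by simp [faceOf], fun u hu v hv => ⟨fun i => ?_, fun i hi => ?_⟩,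
    fun u hu v hv huv => ?_⟩
  · simpa using add_nonneg (hu.1 i) (hv.1 i)
  · simp [hu.2 i hi, hv.2 i hi]
  · have hzero : ∀ i, ℓ i x = 0 → ℓ i u = 0 ∧ ℓ i v = 0 := fun i hi => by
      have := huv.2 i hi
      rw [map_add] at this
      constructor <;> linarith [hu i, hv i]
    exact ⟨⟨hu, fun i hi => (hzero i hi).1⟩, ⟨hv, fun i hi => (hzero i hi).2⟩⟩

variable [TopologicalSpace E] [IsTopologicalAddGroup E] [ContinuousSMul ℝ E]

theorem mem_intrinsicInterior_faceOf [Finite ι] [T2Space E] [FiniteDimensional ℝ E] {x : E}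
    (hx : ∀ i, 0 ≤ ℓ i x) : x ∈ intrinsicInterior ℝ (faceOf ℓ x) := by
  let L : Submodule ℝ E := ⨅ i ∈ {i | ℓ i x = 0}, LinearMap.ker (ℓ i)
  let U : Set E := ⋂ i ∈ {i | ℓ i x ≠ 0}, ℓ i ⁻¹' Ioi 0
  have hL : ∀ y, y ∈ L ↔ ∀ i, ℓ i x = 0 → ℓ i y = 0 := by simp [L]
  have hU : ∀ y, y ∈ U ↔ ∀ i, ℓ i x ≠ 0 → 0 < ℓ i y := by simp [U]
  have hUopen : IsOpen U := (toFinite _).isOpen_biInter fun i _ =>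
    isOpen_Ioi.preimage (ℓ i).continuous_of_finiteDimensional
  refine mem_intrinsicInterior_of_inter_subset L.toAffineSubspace (fun y hy => (hL y).2 hy.2)
    hUopen (fun y ⟨hyL, hyU⟩ => ?_) ⟨hx, fun _ h => h⟩ ((hU x).2 fun i hi => (hx i).lt_of_ne' hi)
  have hyL := (hL y).1 hyL
  refine ⟨fun i => ?_, hyL⟩
  by_cases hi : ℓ i x = 0
  · exact (hyL i hi).ge
  · exact ((hU y).1 hyU i hi).le

theorem subset_faceOf_add {σ : Set E} (hσ : IsConeFace σ {y | ∀ i, 0 ≤ ℓ i y}) {a b : E}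
    (ha : a ∈ intrinsicInterior ℝ σ) (hb : ∀ i, 0 ≤ ℓ i b) : σ ⊆ faceOf ℓ (a + b) := by
  refine fun y hy => ⟨hσ.1 hy, fun i hi => ?_⟩
  have hai : ℓ i a = 0 := by
    have := hσ.1 (intrinsicInterior_subset ha) i
    rw [map_add] at hi
    linarith [hb i]
  exact eq_zero_of_mem_intrinsicInterior (fun z hz => hσ.1 hz i) hσ.2.1 ha hai hy

end PolyCone

open PolyCone in
theorem face_relint_add_cone_general {n : ℕ} (C σ : Set (Fin n → ℝ))
    (hC : IsPolyCone C)
    (hσ : IsConeFace σ C) :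
    intrinsicInterior ℝ σ + C =
      ⋃ σ' ∈ {σ' : Set (Fin n → ℝ) | IsConeFace σ' C ∧ σ ⊆ σ'},
        intrinsicInterior ℝ σ' := by
  obtain ⟨m, ℓ, rfl⟩ := hC
  have hcone : ∀ t : ℝ, 0 < t → ∀ x ∈ {x | ∀ i, 0 ≤ ℓ i x}, t • x ∈ {x | ∀ i, 0 ≤ ℓ i x} :=
    fun t ht x hx i => by simpa using mul_nonneg ht.le (hx i)
  ext x
  simp only [mem_iUnion, exists_prop]
  constructor
  · rintro ⟨a, ha, b, hb, rfl⟩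
    have hab : ∀ i, 0 ≤ ℓ i (a + b) := fun i => by
      simpa using add_nonneg (hσ.1 (intrinsicInterior_subset ha) i) (hb i)
    exact ⟨faceOf ℓ (a + b), ⟨isConeFace_faceOf ℓ _, subset_faceOf_add ℓ hσ ha hb⟩,
      mem_intrinsicInterior_faceOf ℓ hab⟩
  · rintro ⟨σ', ⟨hσ', hσσ'⟩, hx⟩
    exact intrinsicInterior_subset_intrinsicInterior_add hcone hσ hσσ' hσ'.1 hx

/-- `σ° + C` equals the union of the relative interiors of the faces
of `C` containing `σ`. -/
theorem face_relint_add_cone {n : ℕ} (C σ : Set (Fin n → ℝ))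
    (hC : IsPolyCone C) (hpointed : C ∩ (-C) = {0}) (hspan : C - C = Set.univ)
    (hσ : IsConeFace σ C) :
    intrinsicInterior ℝ σ + C =
      ⋃ σ' ∈ {σ' : Set (Fin n → ℝ) | IsConeFace σ' C ∧ σ ⊆ σ'},
        intrinsicInterior ℝ σ' :=
  face_relint_add_cone_general C σ hC hσ
end

section
/- Let C be a pointed, spanning polyhedral cone in E = ℝⁿ, let σ be a face of C, let a ∈ E, and let (a_k) be a sequence in E converging to a. Then ⋃_k (a_k − C) ⊇ a − interior(C), where interior(C) is the topological interior of C. If moreover a_k ∈ a − σ° for every k, then ⋃_k (a_k − C) = a − (σ° + C). -/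
/-!
A point `a - c` with `c ∈ interior C` lies in `a_k - C` as soon as `a_k` is close enough to `a`
that `a_k - a + c ∈ C`. Under the extra hypothesis write `a_k = a - s_k` with `s_k ∈ σ°`, so
`s_k → 0`. Then `a_k - C ⊆ a - (σ° + C)` at once. Conversely, for `t ∈ σ°` the points `t - s_k`
stay in the affine span of `σ` (which contains `0`) and tend to `t`, so they lie in `σ ⊆ C` for
large `k`, and `a - (t + c) = a_k - ((t - s_k) + c) ∈ a_k - C` because `C + C ⊆ C`.
-/

open Pointwise

open Filter Topology Set

section TopologicalAddGroup

variable {G : Type*} [AddCommGroup G] [TopologicalSpace G] [IsTopologicalAddGroup G]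
  {ι : Type*} {l : Filter ι} {u : ι → G} {a : G}

theorem sub_interior_subset_iUnion_sub [l.NeBot] (hu : Tendsto u l (𝓝 a)) (C : Set G) :
    {a} - interior C ⊆ ⋃ i, {u i} - C := by
  rw [singleton_sub]
  rintro _ ⟨c, hc, rfl⟩
  have hlim : Tendsto (fun i => u i - (a - c)) l (𝓝 c) := by
    simpa using hu.sub_const (a - c)
  obtain ⟨i, hi⟩ := (hlim.eventually_mem (mem_interior_iff_mem_nhds.mp hc)).exists
  exact mem_iUnion.mpr ⟨i, mem_sub.mpr ⟨u i, rfl, _, hi, sub_sub_cancel _ _⟩⟩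

end TopologicalAddGroup

section IntrinsicInterior

variable {𝕜 V : Type*} [Ring 𝕜] [AddCommGroup V] [Module 𝕜 V] [TopologicalSpace V]

theorem mem_nhdsWithin_affineSpan_of_mem_intrinsicInterior {σ : Set V} {t : V}
    (ht : t ∈ intrinsicInterior 𝕜 σ) : σ ∈ 𝓝[affineSpan 𝕜 σ] t := by
  obtain ⟨⟨t, htA⟩, hint, rfl⟩ := ht
  rw [nhdsWithin_eq_map_subtype_coe htA]
  exact mem_interior_iff_mem_nhds.mp hint

variable [IsTopologicalAddGroup V]

theorem eventually_sub_mem_of_mem_intrinsicInterior {σ : Set V} (h0 : (0 : V) ∈ σ) {t : V}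
    (ht : t ∈ intrinsicInterior 𝕜 σ) {ι : Type*} {l : Filter ι} {s : ι → V}
    (hs : Tendsto s l (𝓝 0)) (hsσ : ∀ i, s i ∈ σ) : ∀ᶠ i in l, t - s i ∈ σ := by
  have htA : t ∈ affineSpan 𝕜 σ := subset_affineSpan 𝕜 σ (intrinsicInterior_subset ht)
  have hlim : Tendsto (fun i => t - s i) l (𝓝[affineSpan 𝕜 σ] t) := by
    refine tendsto_nhdsWithin_iff.mpr ⟨by simpa using hs.const_sub t, Eventually.of_forall ?_⟩
    intro i
    have hdir := AffineSubspace.vsub_mem_direction htA (subset_affineSpan 𝕜 σ (hsσ i))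
    simpa using AffineSubspace.vadd_mem_of_mem_direction hdir (subset_affineSpan 𝕜 σ h0)
  exact hlim.eventually_mem (mem_nhdsWithin_affineSpan_of_mem_intrinsicInterior ht)

theorem iUnion_sub_eq_sub_intrinsicInterior_add {C σ : Set V}
    (hC : ∀ x ∈ C, ∀ y ∈ C, x + y ∈ C) (hσC : σ ⊆ C) (h0 : (0 : V) ∈ σ)
    {ι : Type*} {l : Filter ι} [l.NeBot] {u : ι → V} {a : V} (hu : Tendsto u l (𝓝 a))
    (hmem : ∀ i, u i ∈ {a} - intrinsicInterior 𝕜 σ) :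
    ⋃ i, {u i} - C = {a} - (intrinsicInterior 𝕜 σ + C) := by
  have hs : ∀ i, a - u i ∈ intrinsicInterior 𝕜 σ := by
    intro i
    obtain ⟨a', ha', t, ht, hti⟩ := mem_sub.mp (hmem i)
    subst a'
    rwa [← hti, sub_sub_cancel]
  have hs0 : Tendsto (fun i => a - u i) l (𝓝 0) := by
    simpa using hu.const_sub a
  apply Subset.antisymm
  · refine iUnion_subset fun i x hx => ?_
    obtain ⟨_, rfl, c, hc, rfl⟩ := mem_sub.mp hx
    exact mem_sub.mpr ⟨a, rfl, a - u i + c, add_mem_add (hs i) hc, by abel⟩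
  · intro x hx
    obtain ⟨a', ha', _, htc, rfl⟩ := mem_sub.mp hx
    subst a'
    obtain ⟨t, ht, c, hc, rfl⟩ := mem_add.mp htc
    obtain ⟨i, hi⟩ : ∃ i, t - (a - u i) ∈ σ :=
      (eventually_sub_mem_of_mem_intrinsicInterior h0 ht hs0
        fun i => intrinsicInterior_subset (hs i)).exists
    exact mem_iUnion.mpr ⟨i, mem_sub.mpr ⟨u i, rfl, t - (a - u i) + c, hC _ (hσC hi) _ hc, by abel⟩⟩

end IntrinsicInterior

theorem IsPolyCone.add_mem {n : ℕ} {C : Set (Fin n → ℝ)} (hC : IsPolyCone C) {x y : Fin n → ℝ}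
    (hx : x ∈ C) (hy : y ∈ C) : x + y ∈ C := by
  obtain ⟨m, ℓ, rfl⟩ := hC
  intro i
  simpa using add_nonneg (hx i) (hy i)

theorem union_translates_of_tendsto_general {n : ℕ} (C σ : Set (Fin n → ℝ))
    (hC : IsPolyCone C)
    (hσ : IsConeFace σ C) (a : Fin n → ℝ) (aseq : ℕ → Fin n → ℝ)
    (hconv : Filter.Tendsto aseq Filter.atTop (nhds a)) :
    ({a} - interior C ⊆ ⋃ k, ({aseq k} - C)) ∧
    ((∀ k, aseq k ∈ ({a} : Set (Fin n → ℝ)) - intrinsicInterior ℝ σ) →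
      (⋃ k, ({aseq k} - C)) = {a} - (intrinsicInterior ℝ σ + C)) :=
  ⟨sub_interior_subset_iUnion_sub hconv C,
    iUnion_sub_eq_sub_intrinsicInterior_add (fun _ hx _ hy => hC.add_mem hx hy) hσ.1 hσ.2.1 hconv⟩

/-- If `a_k → a` then `⋃_k (a_k - C) ⊇ a - interior C`; and if moreover
`a_k ∈ a - σ°` for all `k`, then `⋃_k (a_k - C) = a - (σ° + C)`. -/
theorem union_translates_of_tendsto {n : ℕ} (C σ : Set (Fin n → ℝ))
    (hC : IsPolyCone C) (hpointed : C ∩ (-C) = {0}) (hspan : C - C = Set.univ)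
    (hσ : IsConeFace σ C) (a : Fin n → ℝ) (aseq : ℕ → Fin n → ℝ)
    (hconv : Filter.Tendsto aseq Filter.atTop (nhds a)) :
    ({a} - interior C ⊆ ⋃ k, ({aseq k} - C)) ∧
    ((∀ k, aseq k ∈ ({a} : Set (Fin n → ℝ)) - intrinsicInterior ℝ σ) →
      (⋃ k, ({aseq k} - C)) = {a} - (intrinsicInterior ℝ σ + C)) :=
  union_translates_of_tendsto_general C σ hC hσ a aseq hconv
end

section
/- Let C be a pointed, spanning polyhedral cone in E = ℝⁿ and let D ⊆ E be a downset for the order induced by C. Then a point a ∈ E lies in the topological closure of D if and only if D contains a − interior(C), i.e., a − v ∈ D for every v in the topological interior of C. -/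
open Pointwise

/-! If `d ∈ D` is close to `a`, then `d - (a - v)` is close to `v ∈ interior C`, hence lies in `C`,
so `a - v ≼ d` and `a - v ∈ D`. Conversely, the interior of a convex spanning cone is nonempty and
has `0` in its closure, so `a` is a limit of the points `a - v` with `v ∈ interior C`, which lie in `D`. -/

section

variable {E : Type*} [AddCommGroup E] [TopologicalSpace E] [IsTopologicalAddGroup E]

theorem sub_mem_of_mem_closure_of_mem_interior {C D : Set E}
    (hD : ∀ x y, y ∈ D → y - x ∈ C → x ∈ D) {a v : E}
    (ha : a ∈ closure D) (hv : v ∈ interior C) : a - v ∈ D := by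
  have hnhds : (fun d => d - (a - v)) ⁻¹' interior C ∈ nhds a :=
    (isOpen_interior.preimage (continuous_sub_right _)).mem_nhds (by simpa using hv)
  obtain ⟨d, hdC, hdD⟩ := mem_closure_iff_nhds.1 ha _ hnhds
  exact hD _ d hdD (interior_subset hdC)

theorem mem_closure_of_sub_interior_subset [Module ℝ E] [ContinuousSMul ℝ E] {C D : Set E}
    (hconv : Convex ℝ C) (h0 : (0 : E) ∈ C) (hint : (interior C).Nonempty) {a : E}
    (h : ∀ v ∈ interior C, a - v ∈ D) : a ∈ closure D := by
  have h0' : (0 : E) ∈ closure (interior C) := by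
    rw [hconv.closure_interior_eq_closure_of_nonempty_interior hint]
    exact subset_closure h0
  simpa using map_mem_closure (continuous_const.sub continuous_id) h0' h

end

theorem Convex.interior_nonempty_of_sub_eq_univ {V : Type*} [NormedAddCommGroup V]
    [NormedSpace ℝ V] [FiniteDimensional ℝ V] {C : Set V} (hconv : Convex ℝ C)
    (hspan : C - C = Set.univ) : (interior C).Nonempty := by
  have hne : C.Nonempty := by
    obtain ⟨x, hx, -⟩ := hspan.symm ▸ Set.mem_univ (0 : V)
    exact ⟨x, hx⟩
  rw [hconv.interior_nonempty_iff_affineSpan_eq_top,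
    AffineSubspace.affineSpan_eq_top_iff_vectorSpan_eq_top_of_nonempty ℝ V V hne,
    vectorSpan_def]
  exact (congrArg (Submodule.span ℝ) hspan).trans Submodule.span_univ

namespace IsPolyCone

variable {n : ℕ} {C : Set (Fin n → ℝ)}

theorem convex (hC : IsPolyCone C) : Convex ℝ C := by
  obtain ⟨m, ℓ, rfl⟩ := hC
  intro x hx y hy s t hs ht _ i
  simpa using add_nonneg (mul_nonneg hs (hx i)) (mul_nonneg ht (hy i))

theorem zero_mem (hC : IsPolyCone C) : (0 : Fin n → ℝ) ∈ C := by
  obtain ⟨m, ℓ, rfl⟩ := hC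
  simp

end IsPolyCone

theorem mem_closure_downset_iff_general {n : ℕ} (C D : Set (Fin n → ℝ))
    (hC : IsPolyCone C) (hspan : C - C = Set.univ)
    (hD : IsDownset C D) (a : Fin n → ℝ) :
    a ∈ closure D ↔ ∀ v ∈ interior C, a - v ∈ D :=
  ⟨fun ha _ hv => sub_mem_of_mem_closure_of_mem_interior hD ha hv,
    mem_closure_of_sub_interior_subset hC.convex hC.zero_mem
      (hC.convex.interior_nonempty_of_sub_eq_univ hspan)⟩

/-- A point lies in the closure of a downset `D` iff `D` contains the
translate `a - interior C` of the interior of the negative cone. -/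
theorem mem_closure_downset_iff {n : ℕ} (C D : Set (Fin n → ℝ))
    (hC : IsPolyCone C) (hpointed : C ∩ (-C) = {0}) (hspan : C - C = Set.univ)
    (hD : IsDownset C D) (a : Fin n → ℝ) :
    a ∈ closure D ↔ ∀ v ∈ interior C, a - v ∈ D :=
  mem_closure_downset_iff_general C D hC hspan hD a
end

section
/- Let C be a pointed, spanning polyhedral cone in E = ℝⁿ, let D ⊆ E be a downset, and let a lie in the topological closure of D. Define the tangent cone T_a D = {v ∈ −C | ∃ ε₀ > 0 such that a + εv ∈ D for all 0 < ε ≤ ε₀}. Then there exists a set ∇ of faces of C that is closed under passing to larger faces (if σ ∈ ∇ and σ' is a face of C with σ ⊆ σ', then σ' ∈ ∇) such that T_a D = −⋃_{σ ∈ ∇} σ°. -/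
open Pointwise

/-! If `-u` is a tangent direction of `D` at `a` and `u` lies in a face `σ` of `C`, then every
`w ∈ σ°` satisfies `w - δ • u ∈ σ ⊆ C` for some `δ > 0`, so `a - ε • w ≼ a - (ε * δ) • u` and
`-w` is a tangent direction too. Every point `u` of a polyhedral cone lies in the relative
interior of a face, namely the one cut out by the inequalities tight at `u`. Hence the tangent
cone is `-⋃ σ°` over the faces `σ` containing some `u` with `-u` tangent, a family that is
obviously closed under passing to larger faces. -/

open Filter Topology

theorem exists_sub_smul_mem_of_mem_intrinsicInterior {E : Type*} [NormedAddCommGroup E]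
    [NormedSpace ℝ E] {σ : Set E} {w u : E} (h0 : (0 : E) ∈ σ)
    (hw : w ∈ intrinsicInterior ℝ σ) (hu : u ∈ σ) : ∃ δ > (0 : ℝ), w - δ • u ∈ σ := by
  obtain ⟨w', hw', rfl⟩ := mem_intrinsicInterior.1 hw
  have hline (δ : ℝ) : (w' : E) - δ • u ∈ affineSpan ℝ σ := by
    simpa [vsub_eq_sub, vadd_eq_add, sub_eq_neg_add] using
      AffineSubspace.smul_vsub_vadd_mem _ δ (subset_affineSpan ℝ σ h0)
        (subset_affineSpan ℝ σ hu) w'.2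
  let f : ℝ → affineSpan ℝ σ := fun δ => ⟨w' - δ • u, hline δ⟩
  have hf : Tendsto f (𝓝 0) (𝓝 w') := by
    have : Continuous f := by fun_prop
    simpa [f] using this.tendsto 0
  have hnear : ∀ᶠ δ in 𝓝[>] 0, (f δ : E) ∈ σ :=
    nhdsWithin_le_nhds (hf.eventually (mem_interior_iff_mem_nhds.1 hw'))
  obtain ⟨δ, hδσ, hδ⟩ := (hnear.and self_mem_nhdsWithin).exists
  exact ⟨δ, hδ, hδσ⟩

section TightFace

variable {ι E : Type*}

/-- When `u` lies in the cone `{x | ∀ i, 0 ≤ ℓ i x}`, this is the face of the cone having `u`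
in its relative interior. -/
def tightFace [AddCommGroup E] [Module ℝ E] (ℓ : ι → E →ₗ[ℝ] ℝ) (u : E) : Set E :=
  {x | ∀ i, 0 ≤ ℓ i x ∧ (ℓ i u = 0 → ℓ i x = 0)}

theorem mem_tightFace_self [AddCommGroup E] [Module ℝ E] {ℓ : ι → E →ₗ[ℝ] ℝ} {u : E}
    (hu : ∀ i, 0 ≤ ℓ i u) : u ∈ tightFace ℓ u :=
  fun i => ⟨hu i, id⟩

theorem isConeFace_tightFace [AddCommGroup E] [Module ℝ E] (ℓ : ι → E →ₗ[ℝ] ℝ) (u : E) :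
    IsConeFace (tightFace ℓ u) {x | ∀ i, 0 ≤ ℓ i x} := by
  refine ⟨fun x hx i => (hx i).1, fun i => by simp, ?_, ?_⟩
  · intro x hx y hy i
    refine ⟨?_, fun h => ?_⟩
    · rw [map_add]; exact add_nonneg (hx i).1 (hy i).1
    · rw [map_add, (hx i).2 h, (hy i).2 h, add_zero]
  · intro x hx y hy hxy
    have hsum (i) (h : ℓ i u = 0) : ℓ i x + ℓ i y = 0 := by rw [← map_add]; exact (hxy i).2 h
    exact ⟨fun i => ⟨hx i, fun h => by linarith [hsum i h, hx i, hy i]⟩,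
      fun i => ⟨hy i, fun h => by linarith [hsum i h, hx i, hy i]⟩⟩

theorem mem_intrinsicInterior_tightFace [Finite ι] [NormedAddCommGroup E] [NormedSpace ℝ E]
    [FiniteDimensional ℝ E] {ℓ : ι → E →ₗ[ℝ] ℝ} {u : E} (hu : ∀ i, 0 ≤ ℓ i u) :
    u ∈ intrinsicInterior ℝ (tightFace ℓ u) := by
  have htight (i) (hi : ℓ i u = 0) : ∀ x ∈ affineSpan ℝ (tightFace ℓ u), ℓ i x = 0 := by
    have : affineSpan ℝ (tightFace ℓ u) ≤ (LinearMap.ker (ℓ i)).toAffineSubspace :=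
      affineSpan_le.2 fun x hx => (hx i).2 hi
    exact fun x hx => this hx
  have hslack : ∀ᶠ x in 𝓝 u, ∀ i, ℓ i u ≠ 0 → 0 < ℓ i x := by
    refine eventually_all.2 fun i => ?_
    by_cases hi : ℓ i u = 0
    · exact Eventually.of_forall fun _ h => absurd hi h
    · exact ((ℓ i).continuous_of_finiteDimensional.continuousAt.eventually
        (Ioi_mem_nhds ((hu i).lt_of_ne' hi))).mono fun _ hx _ => hx
  refine mem_intrinsicInterior.2 ⟨⟨u, subset_affineSpan ℝ _ (mem_tightFace_self hu)⟩,
    mem_interior_iff_mem_nhds.2 ?_, rfl⟩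
  refine ((continuous_subtype_val.tendsto _).eventually hslack).mono fun x hx i => ?_
  by_cases hi : ℓ i u = 0
  · have := htight i hi x x.2
    exact ⟨this.ge, fun _ => this⟩
  · exact ⟨(hx i hi).le, fun h => absurd h hi⟩

end TightFace

/-- The tangent cone `T_a D`. -/
def downTangentCone {n : ℕ} (C D : Set (Fin n → ℝ)) (a : Fin n → ℝ) : Set (Fin n → ℝ) :=
  {v | v ∈ -C ∧ ∃ ε₀ > (0 : ℝ), ∀ ε : ℝ, 0 < ε → ε ≤ ε₀ → a + ε • v ∈ D}

theorem neg_mem_downTangentCone_of_mem_intrinsicInterior {n : ℕ} {C D σ : Set (Fin n → ℝ)}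
    {a u w : Fin n → ℝ} (hD : IsDownset C D) (hC : ∀ t : ℝ, 0 < t → ∀ x ∈ C, t • x ∈ C)
    (hσC : σ ⊆ C) (hσ0 : 0 ∈ σ) (hu : u ∈ σ) (huT : -u ∈ downTangentCone C D a)
    (hw : w ∈ intrinsicInterior ℝ σ) : -w ∈ downTangentCone C D a := by
  obtain ⟨-, ε₀, hε₀, hεu⟩ := huT
  obtain ⟨δ, hδ, hwu⟩ := exists_sub_smul_mem_of_mem_intrinsicInterior hσ0 hw hu
  refine ⟨by simpa using hσC (intrinsicInterior_subset hw), ε₀ / δ, div_pos hε₀ hδ,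
    fun ε hε hεδ => hD _ _ (hεu (ε * δ) (mul_pos hε hδ) ((le_div_iff₀ hδ).1 hεδ)) ?_⟩
  convert hC ε hε _ (hσC hwu) using 1
  module

theorem tangentCone_downset_shape_general {n : ℕ} (C D : Set (Fin n → ℝ))
    (hC : IsPolyCone C) (hD : IsDownset C D) (a : Fin n → ℝ) :
    ∃ nab : Set (Set (Fin n → ℝ)),
      (∀ σ ∈ nab, IsConeFace σ C) ∧
      (∀ σ ∈ nab, ∀ σ' : Set (Fin n → ℝ), IsConeFace σ' C → σ ⊆ σ' → σ' ∈ nab) ∧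
      {v : Fin n → ℝ | v ∈ -C ∧ ∃ ε₀ > (0 : ℝ), ∀ ε : ℝ, 0 < ε → ε ≤ ε₀ → a + ε • v ∈ D}
        = -⋃ σ ∈ nab, intrinsicInterior ℝ σ := by
  obtain ⟨m, ℓ, rfl⟩ := hC
  set C : Set (Fin n → ℝ) := {x | ∀ i, 0 ≤ ℓ i x}
  have hCsmul (t : ℝ) (ht : 0 < t) (x) (hx : x ∈ C) : t • x ∈ C := fun i => by
    rw [map_smul, smul_eq_mul]; exact mul_nonneg ht.le (hx i)
  refine ⟨{σ | IsConeFace σ C ∧ ∃ u ∈ σ, -u ∈ downTangentCone C D a}, fun σ hσ => hσ.1,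
    fun σ ⟨_, u, hu, huT⟩ σ' hσ' hσσ' => ⟨hσ', u, hσσ' hu, huT⟩, ?_⟩
  show downTangentCone C D a = _
  ext v
  rw [Set.mem_neg, Set.mem_iUnion₂]
  constructor
  · intro hv
    exact ⟨tightFace ℓ (-v), ⟨isConeFace_tightFace ℓ (-v), -v, mem_tightFace_self hv.1,
      by rwa [neg_neg]⟩, mem_intrinsicInterior_tightFace hv.1⟩
  · rintro ⟨σ, ⟨hσ, u, hu, huT⟩, hvσ⟩
    simpa only [neg_neg] using
      neg_mem_downTangentCone_of_mem_intrinsicInterior hD hCsmul hσ.1 hσ.2.1 hu huT hvσ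

/-- The tangent cone of a downset at a point of its closure is the
negative of a union of relative interiors of faces forming a cocomplex. -/
theorem tangentCone_downset_shape {n : ℕ} (C D : Set (Fin n → ℝ))
    (hC : IsPolyCone C) (hpointed : C ∩ (-C) = {0}) (hspan : C - C = Set.univ)
    (hD : IsDownset C D) (a : Fin n → ℝ) (ha : a ∈ closure D) :
    ∃ nab : Set (Set (Fin n → ℝ)),
      (∀ σ ∈ nab, IsConeFace σ C) ∧
      (∀ σ ∈ nab, ∀ σ' : Set (Fin n → ℝ), IsConeFace σ' C → σ ⊆ σ' → σ' ∈ nab) ∧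
      {v : Fin n → ℝ | v ∈ -C ∧ ∃ ε₀ > (0 : ℝ), ∀ ε : ℝ, 0 < ε → ε ≤ ε₀ → a + ε • v ∈ D}
        = -⋃ σ ∈ nab, intrinsicInterior ℝ σ :=
  tangentCone_downset_shape_general C D hC hD a
end

section
/- Let C be a pointed, spanning polyhedral cone in E = ℝⁿ and let D ⊆ E be a downset. Suppose b ∈ D is such that the part of D above b is closed: (b + C) ∩ D = (b + C) ∩ closure(D). Then there exist a face τ of C and a point a ∈ D with b ≼ a and (a + C) ∩ D = a + τ (i.e., a is a closed cogenerator of D along τ). -/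
open Pointwise

/-!
Write `C = {x | ∀ i, 0 ≤ ℓ i x}` and look at the slices `{x ∈ C | c + x ∈ D}` above points `c`.
Moving `c` up only enlarges the set of indices `i` with `ℓ i` bounded above on the slice, so some
`c₀ ≽ b` makes this set `I` maximal, and then it is `I` at every point above `c₀`. If `g`
maximises `∑ i ∈ I, ℓ i` on the slice at `c₀`, the slice at `c₀ + g` lies in the face
`{ℓ i = 0, i ∈ I}`; it contains the whole face because the remaining `ℓ j` are unbounded on every
higher slice, so the slice climbs above any point of the face.

The maximiser exists because a linear `ψ` bounded above on a closed lower subset `U` of a pointed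
polyhedral cone attains its supremum. Every point of `U` lies above a point of `U` that cannot be
lowered inside `C` without lowering `ψ` (minimise `∑ i, ℓ i`), and these points form a bounded set:
along a nonzero direction `v` of their asymptotic cone one has `ψ v ≤ 0`, and polyhedrality gives
`y - v ∈ C` for such points `y` far out.
-/

open Filter Bornology AffineSpace

def above {E : Type*} [Add E] (C U : Set E) (c : E) : Set E := {x | x ∈ C ∧ c + x ∈ U}

theorem singleton_add_inter_eq {E : Type*} [Add E] (C U : Set E) (c : E) :
    ({c} + C) ∩ U = {c} + above C U c := by
  ext x
  simp only [Set.singleton_add, Set.mem_inter_iff, Set.mem_image, above, Set.mem_ofPred_eq]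
  constructor
  · rintro ⟨⟨y, hy, rfl⟩, hyU⟩
    exact ⟨y, ⟨hy, hyU⟩, rfl⟩
  · rintro ⟨y, ⟨hy, hyU⟩, rfl⟩
    exact ⟨⟨y, hy, rfl⟩, hyU⟩

structure IsLowerIn {E : Type*} [Sub E] (C U : Set E) : Prop where
  subset : U ⊆ C
  mem_of_sub_mem : ∀ x ∈ U, ∀ y ∈ C, x - y ∈ C → y ∈ U

/-- `y` is minimal, for `x ≼ y ↔ y - x ∈ C`, among the points of `C` below it at which `ψ` is at
least `ψ y`. -/
def IsLevelMinimal {E : Type*} [AddCommGroup E] [Module ℝ E] (C : Set E) (ψ : E →ₗ[ℝ] ℝ)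
    (y : E) : Prop :=
  ∀ w ∈ C, y - w ∈ C → ψ w ≤ 0 → w = 0

section PolyhedralCone

variable {E ι : Type*} [AddCommGroup E] [Module ℝ E] (ℓ : ι → E →ₗ[ℝ] ℝ)

def polyCone : Set E := {x | ∀ i, 0 ≤ ℓ i x}

def face (I : Finset ι) : Set E := {x | x ∈ polyCone ℓ ∧ ∀ i ∈ I, ℓ i x = 0}

open Classical in
noncomputable def boundedIndices [Fintype ι] (U : Set E) : Finset ι := {i | BddAbove (ℓ i '' U)}

variable {ℓ}

theorem zero_mem_polyCone : (0 : E) ∈ polyCone ℓ := fun i => by simp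

theorem add_mem_polyCone {x y : E} (hx : x ∈ polyCone ℓ) (hy : y ∈ polyCone ℓ) :
    x + y ∈ polyCone ℓ := fun i => by
  rw [map_add]
  exact add_nonneg (hx i) (hy i)

theorem smul_mem_polyCone {x : E} {t : ℝ} (ht : 0 ≤ t) (hx : x ∈ polyCone ℓ) :
    t • x ∈ polyCone ℓ := fun i => by
  rw [map_smul, smul_eq_mul]
  exact mul_nonneg ht (hx i)

theorem isConeFace_face (I : Finset ι) : IsConeFace (face ℓ I) (polyCone ℓ) := by
  refine ⟨fun x hx => hx.1, ⟨zero_mem_polyCone, by simp⟩,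
    fun x hx y hy => ⟨add_mem_polyCone hx.1 hy.1, fun i hi => by simp [hx.2 i hi, hy.2 i hi]⟩,
    fun x hx y hy hxy => ?_⟩
  have hzero : ∀ i ∈ I, ℓ i x = 0 ∧ ℓ i y = 0 := fun i hi => by
    have := hxy.2 i hi
    rw [map_add] at this
    constructor <;> linarith [hx i, hy i]
  exact ⟨⟨hx, fun i hi => (hzero i hi).1⟩, ⟨hy, fun i hi => (hzero i hi).2⟩⟩

theorem mem_boundedIndices [Fintype ι] {U : Set E} {i : ι} :
    i ∈ boundedIndices ℓ U ↔ BddAbove (ℓ i '' U) := by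
  simp [boundedIndices]

theorem eq_zero_of_mem_polyCone_of_sum_le_zero [Fintype ι] (hsep : ∀ x, (∀ i, ℓ i x = 0) → x = 0)
    {w : E} (hw : w ∈ polyCone ℓ) (h : ∑ i, ℓ i w ≤ 0) : w = 0 :=
  hsep w fun i =>
    le_antisymm ((Finset.single_le_sum (fun j _ => hw j) (Finset.mem_univ i)).trans h) (hw i)

theorem above_above {U : Set E} {c x : E} (hx : x ∈ polyCone ℓ) :
    above (polyCone ℓ) (above (polyCone ℓ) U c) x = above (polyCone ℓ) U (c + x) := by
  ext y
  simp only [above, Set.mem_ofPred_eq, add_assoc]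
  exact ⟨fun ⟨hy, _, h⟩ => ⟨hy, h⟩, fun ⟨hy, h⟩ => ⟨hy, add_mem_polyCone hx hy, h⟩⟩

theorem IsLowerIn.above {U : Set E} (hU : IsLowerIn (polyCone ℓ) U) {c : E}
    (hc : c ∈ polyCone ℓ) : IsLowerIn (polyCone ℓ) (above (polyCone ℓ) U c) where
  subset _ hx := hx.1
  mem_of_sub_mem x hx y hy hxy :=
    ⟨hy, hU.mem_of_sub_mem _ hx.2 _ (add_mem_polyCone hc hy) (by rwa [add_sub_add_left_eq_sub])⟩

theorem boundedIndices_above_subset [Fintype ι] {U : Set E} {c c' : E} (h : c' - c ∈ polyCone ℓ) :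
    boundedIndices ℓ (above (polyCone ℓ) U c) ⊆ boundedIndices ℓ (above (polyCone ℓ) U c') := by
  intro i hi
  obtain ⟨B, hB⟩ := mem_boundedIndices.1 hi
  refine mem_boundedIndices.2 ⟨B - ℓ i (c' - c), ?_⟩
  rintro _ ⟨y, hy, rfl⟩
  have hle : ℓ i (c' - c + y) ≤ B :=
    hB ⟨_, ⟨add_mem_polyCone h hy.1, by rw [← add_assoc, add_sub_cancel]; exact hy.2⟩, rfl⟩
  rw [map_add] at hle
  linarith

theorem exists_mem_above_ge {U : Set E} {a : E} (ha : a ∈ U) (J : Finset ι)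
    (hunb : ∀ c ∈ U, c - a ∈ polyCone ℓ → ∀ j ∈ J, ¬BddAbove (ℓ j '' above (polyCone ℓ) U c))
    (s : E) : ∃ u ∈ above (polyCone ℓ) U a, ∀ j ∈ J, ℓ j s ≤ ℓ j u := by
  classical
  induction J using Finset.induction_on with
  | empty => exact ⟨0, ⟨zero_mem_polyCone, by simpa using ha⟩, by simp⟩
  | insert j J _ ih =>
    obtain ⟨u, hu, huJ⟩ := ih fun c hc hca k hk => hunb c hc hca k (Finset.mem_insert_of_mem hk)
    obtain ⟨_, ⟨w, hw, rfl⟩, hjw⟩ := not_bddAbove_iff.1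
      (hunb (a + u) hu.2 (by simpa using hu.1) j (Finset.mem_insert_self j J)) (ℓ j s)
    refine ⟨u + w, ⟨add_mem_polyCone hu.1 hw.1, by rw [← add_assoc]; exact hw.2⟩, ?_⟩
    intro k hk
    rw [map_add]
    rcases Finset.mem_insert.1 hk with rfl | hk
    · linarith [hu.1 k]
    · linarith [huJ k hk, hw.1 k]

theorem above_eq_face_of_isMaxOn [Fintype ι] {U : Set E} (hU : IsLowerIn (polyCone ℓ) U) {c₀ g : E}
    (hc₀ : c₀ ∈ U) {I : Finset ι}
    (hI : ∀ c ∈ U, c - c₀ ∈ polyCone ℓ → boundedIndices ℓ (above (polyCone ℓ) U c) = I)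
    (hg : g ∈ above (polyCone ℓ) U c₀)
    (hmax : IsMaxOn (∑ i ∈ I, ℓ i : E →ₗ[ℝ] ℝ) (above (polyCone ℓ) U c₀) g) :
    above (polyCone ℓ) U (c₀ + g) = face ℓ I := by
  classical
  have hsub : above (polyCone ℓ) U (c₀ + g) ⊆ face ℓ I := by
    rintro x ⟨hx, hxU⟩
    have hle : ∑ i ∈ I, ℓ i (g + x) ≤ ∑ i ∈ I, ℓ i g := by
      simpa using hmax ⟨add_mem_polyCone hg.1 hx, by rwa [← add_assoc]⟩
    simp only [map_add, Finset.sum_add_distrib, add_le_iff_nonpos_right] at hle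
    exact ⟨hx, (Finset.sum_eq_zero_iff_of_nonneg fun i _ => hx i).1
      (le_antisymm hle (Finset.sum_nonneg fun i _ => hx i))⟩
  refine hsub.antisymm fun s ⟨hs, hsI⟩ => ?_
  have hunb : ∀ c ∈ U, c - (c₀ + g) ∈ polyCone ℓ →
      ∀ j ∈ Iᶜ, ¬BddAbove (ℓ j '' above (polyCone ℓ) U c) := fun c hc hcg j hj => by
    have hcc₀ : c - c₀ = c - (c₀ + g) + g := by abel
    rw [← mem_boundedIndices, hI c hc (hcc₀ ▸ add_mem_polyCone hcg hg.1)]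
    exact Finset.mem_compl.1 hj
  obtain ⟨u, hu, hsu⟩ := exists_mem_above_ge hg.2 Iᶜ hunb s
  have hus : u - s ∈ polyCone ℓ := fun i => by
    rw [map_sub, sub_nonneg]
    by_cases hi : i ∈ I
    · rw [hsI i hi, (hsub hu).2 i hi]
    · exact hsu i (Finset.mem_compl.2 hi)
  have hc₀g : c₀ + g ∈ polyCone ℓ := add_mem_polyCone (hU.subset hc₀) hg.1
  exact ⟨hs, hU.mem_of_sub_mem _ hu.2 _ (add_mem_polyCone hc₀g hs)
    (by rwa [add_sub_add_left_eq_sub])⟩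

end PolyhedralCone

section Topology

variable {E ι : Type*} [NormedAddCommGroup E] [NormedSpace ℝ E] [FiniteDimensional ℝ E]
  {ℓ : ι → E →ₗ[ℝ] ℝ}

theorem isClosed_polyCone : IsClosed (polyCone ℓ) := by
  simp only [polyCone, Set.ofPred_forall]
  exact isClosed_iInter fun i => isClosed_le continuous_const (ℓ i).continuous_of_finiteDimensional

theorem isClosed_above {U : Set E} (hU : IsClosed U) (c : E) :
    IsClosed (above (polyCone ℓ) U c) :=
  isClosed_polyCone.inter (hU.preimage (continuous_const_add c))

theorem isClosed_above_of_inter_closure {D : Set E} {b : E}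
    (h : ({b} + polyCone ℓ) ∩ D = ({b} + polyCone ℓ) ∩ closure D) :
    IsClosed (above (polyCone ℓ) D b) := by
  rw [singleton_add_inter_eq, singleton_add_inter_eq, Set.singleton_add, Set.singleton_add] at h
  rw [(add_right_injective b).image_injective h]
  exact isClosed_above isClosed_closure b

theorem asymptoticCone_polyCone :
    asymptoticCone ℝ (polyCone ℓ) = polyCone ℓ := by
  rw [asymptoticCone_eq_closure_of_forall_smul_mem fun c hc x hx => smul_mem_polyCone hc.le hx,
    isClosed_polyCone.closure_eq]

theorem LinearMap.tendsto_asymptoticNhds_atTop {f : E →ₗ[ℝ] ℝ} {v : E} (hv : 0 < f v) :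
    Tendsto f (asymptoticNhds ℝ E v) atTop := by
  rw [asymptoticNhds_eq_smul, ← map₂_smul, ← map_prod_eq_map₂, tendsto_map'_iff]
  simp only [Function.comp_def, map_smul, smul_eq_mul]
  exact tendsto_fst.atTop_mul_pos hv
    ((f.continuous_of_finiteDimensional.tendsto v).comp tendsto_snd)

end Topology

section Attainment

variable {E ι : Type*} [NormedAddCommGroup E] [NormedSpace ℝ E] [FiniteDimensional ℝ E]
  [Fintype ι] {ℓ : ι → E →ₗ[ℝ] ℝ}

theorem isBounded_of_isLevelMinimal {ψ : E →ₗ[ℝ] ℝ} {S : Set E}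
    (hS : ∀ y ∈ S, y ∈ polyCone ℓ ∧ IsLevelMinimal (polyCone ℓ) ψ y) (hψ : BddAbove (ψ '' S)) :
    IsBounded S := by
  by_contra hunb
  obtain ⟨v, hv0, hvS⟩ := (not_bounded_iff_exists_ne_zero_mem_asymptoticCone (V := E)).1 hunb
  have hvC : v ∈ polyCone ℓ :=
    asymptoticCone_polyCone (ℓ := ℓ) ▸ asymptoticCone_mono (fun y hy => (hS y hy).1) hvS
  obtain ⟨B, hB⟩ := hψ
  have hψv : ψ v ≤ 0 := by
    by_contra! hpos
    obtain ⟨p, hpS, hp⟩ :=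
      (hvS.and_eventually ((ψ.tendsto_asymptoticNhds_atTop hpos).eventually_gt_atTop B)).exists
    exact (hB ⟨p, hpS, rfl⟩).not_gt hp
  have hfar : ∀ᶠ p in asymptoticNhds ℝ E v, ∀ i, ℓ i v ≤ 0 ∨ ℓ i v ≤ ℓ i p := by
    refine eventually_all.2 fun i => ?_
    rcases le_or_gt (ℓ i v) 0 with hi | hi
    · exact .of_forall fun _ => Or.inl hi
    · exact ((ℓ i).tendsto_asymptoticNhds_atTop hi).eventually_ge_atTop _ |>.mono fun _ => Or.inr
  obtain ⟨p, hpS, hp⟩ := (hvS.and_eventually hfar).exists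
  refine hv0 ((hS p hpS).2 v hvC (fun i => ?_) hψv)
  rw [map_sub, sub_nonneg]
  exact (hp i).elim (fun hi => hi.trans ((hS p hpS).1 i)) id

theorem isBounded_polyCone_inter_sum_le (hsep : ∀ x, (∀ i, ℓ i x = 0) → x = 0) (r : ℝ) :
    IsBounded {x | x ∈ polyCone ℓ ∧ ∑ i, ℓ i x ≤ r} := by
  refine isBounded_of_isLevelMinimal (ψ := ∑ i, ℓ i)
    (fun y hy => ⟨hy.1, fun w hw _ hρ =>
      eq_zero_of_mem_polyCone_of_sum_le_zero hsep hw (by simpa using hρ)⟩)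
    ⟨r, ?_⟩
  rintro _ ⟨x, hx, rfl⟩
  simpa using hx.2

theorem exists_isLevelMinimal_le (hsep : ∀ x, (∀ i, ℓ i x = 0) → x = 0) {U : Set E}
    (hU : IsLowerIn (polyCone ℓ) U) (hUc : IsClosed U) (ψ : E →ₗ[ℝ] ℝ) {y : E} (hy : y ∈ U) :
    ∃ z ∈ U, IsLevelMinimal (polyCone ℓ) ψ z ∧ ψ y ≤ ψ z := by
  set ρ : E →ₗ[ℝ] ℝ := ∑ i, ℓ i
  have hρ : ∀ x, ρ x = ∑ i, ℓ i x := fun x => by simp [ρ]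
  set T := {z | z ∈ U ∧ ψ y ≤ ψ z ∧ ρ z ≤ ρ y}
  have hT : IsCompact T := by
    refine Metric.isCompact_of_isClosed_isBounded ?_
      ((isBounded_polyCone_inter_sum_le hsep (ρ y)).subset fun z hz => ?_)
    · exact hUc.inter ((isClosed_le continuous_const ψ.continuous_of_finiteDimensional).inter
        (isClosed_le ρ.continuous_of_finiteDimensional continuous_const))
    · exact ⟨hU.subset hz.1, (hρ z).symm.trans_le hz.2.2⟩
  obtain ⟨z, hzT, hzmin⟩ :=
    hT.exists_isMinOn ⟨y, hy, le_rfl, le_rfl⟩ ρ.continuous_of_finiteDimensional.continuousOn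
  refine ⟨z, hzT.1, fun w hw hzw hψw => ?_, hzT.2.1⟩
  have hρw : 0 ≤ ρ w := (hρ w).symm ▸ Finset.sum_nonneg fun i _ => hw i
  -- `z - w` would be a point of `T` with smaller `ρ`
  have hzwT : z - w ∈ T :=
    ⟨hU.mem_of_sub_mem z hzT.1 _ hzw (by rwa [sub_sub_cancel]),
      by rw [map_sub]; linarith [hzT.2.1], by rw [map_sub]; linarith [hzT.2.2]⟩
  have := hzmin hzwT
  simp only [Set.mem_ofPred_eq, map_sub] at this
  exact eq_zero_of_mem_polyCone_of_sum_le_zero hsep hw ((hρ w) ▸ (by linarith))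

theorem exists_isMaxOn_of_bddAbove (hsep : ∀ x, (∀ i, ℓ i x = 0) → x = 0) {U : Set E}
    (hU : IsLowerIn (polyCone ℓ) U) (hUc : IsClosed U) (hne : U.Nonempty) {ψ : E →ₗ[ℝ] ℝ}
    (hψ : BddAbove (ψ '' U)) : ∃ g ∈ U, IsMaxOn ψ U g := by
  set S := {z | z ∈ U ∧ IsLevelMinimal (polyCone ℓ) ψ z}
  have hS : IsCompact (closure S) :=
    (isBounded_of_isLevelMinimal (fun z hz => ⟨hU.subset hz.1, hz.2⟩)
      (hψ.mono (Set.image_mono fun z hz => hz.1))).isCompact_closure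
  obtain ⟨y, hy⟩ := hne
  obtain ⟨z, hzU, hz, -⟩ := exists_isLevelMinimal_le hsep hU hUc ψ hy
  obtain ⟨g, hgS, hg⟩ :=
    hS.exists_isMaxOn ⟨z, subset_closure ⟨hzU, hz⟩⟩ ψ.continuous_of_finiteDimensional.continuousOn
  refine ⟨g, closure_minimal (fun z hz => hz.1) hUc hgS, fun x hx => ?_⟩
  obtain ⟨z, hzU, hz, hxz⟩ := exists_isLevelMinimal_le hsep hU hUc ψ hx
  exact hxz.trans (hg (subset_closure ⟨hzU, hz⟩))

theorem exists_above_eq_face (hsep : ∀ x, (∀ i, ℓ i x = 0) → x = 0) {U : Set E}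
    (hU : IsLowerIn (polyCone ℓ) U) (hUc : IsClosed U) (hne : U.Nonempty) :
    ∃ a ∈ U, ∃ I : Finset ι, above (polyCone ℓ) U a = face ℓ I := by
  obtain ⟨c₀, hc₀, hmaximal⟩ := Set.Finite.exists_maximalFor'
    (fun c => boundedIndices ℓ (above (polyCone ℓ) U c)) U (Set.toFinite _) hne
  set I := boundedIndices ℓ (above (polyCone ℓ) U c₀)
  have hI : ∀ c ∈ U, c - c₀ ∈ polyCone ℓ → boundedIndices ℓ (above (polyCone ℓ) U c) = I :=
    fun c hc hcc₀ => (hmaximal hc (boundedIndices_above_subset hcc₀)).antisymm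
      (boundedIndices_above_subset hcc₀)
  have hbdd : BddAbove ((∑ i ∈ I, ℓ i : E →ₗ[ℝ] ℝ) '' above (polyCone ℓ) U c₀) := by
    have : ∀ i ∈ I, ∃ B, ∀ x ∈ above (polyCone ℓ) U c₀, ℓ i x ≤ B := fun i hi => by
      obtain ⟨B, hB⟩ := mem_boundedIndices.1 hi
      exact ⟨B, fun x hx => hB ⟨x, hx, rfl⟩⟩
    choose! B hB using this
    refine ⟨∑ i ∈ I, B i, ?_⟩
    rintro _ ⟨x, hx, rfl⟩
    simpa using Finset.sum_le_sum fun i hi => hB i hi x hx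
  obtain ⟨g, hg, hgmax⟩ := exists_isMaxOn_of_bddAbove hsep (hU.above (hU.subset hc₀))
    (isClosed_above hUc c₀) ⟨0, zero_mem_polyCone, by simpa using hc₀⟩ hbdd
  exact ⟨c₀ + g, hg.2, I, above_eq_face_of_isMaxOn hU hc₀ hI hg hgmax⟩

end Attainment

theorem IsDownset.isLowerIn_above {n : ℕ} {C D : Set (Fin n → ℝ)} (hD : IsDownset C D)
    (b : Fin n → ℝ) : IsLowerIn C (above C D b) where
  subset _ hx := hx.1
  mem_of_sub_mem x hx y hy hxy := ⟨hy, hD _ _ hx.2 (by rwa [add_sub_add_left_eq_sub])⟩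

theorem exists_closed_cogenerator_above_general {n : ℕ} (C D : Set (Fin n → ℝ))
    (hC : IsPolyCone C) (hpointed : C ∩ (-C) = {0})
    (hD : IsDownset C D) (b : Fin n → ℝ) (hb : b ∈ D)
    (hclosed : ({b} + C) ∩ D = ({b} + C) ∩ closure D) :
    ∃ (τ : Set (Fin n → ℝ)) (a : Fin n → ℝ), IsConeFace τ C ∧ a ∈ D ∧ a - b ∈ C ∧
      ({a} + C) ∩ D = {a} + τ := by
  obtain ⟨m, ℓ, hCℓ⟩ := hC
  replace hCℓ : C = polyCone ℓ := hCℓ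
  subst hCℓ
  have hsep : ∀ x, (∀ i, ℓ i x = 0) → x = 0 := fun x hx => by
    have : x ∈ polyCone ℓ ∩ -polyCone ℓ := ⟨fun i => (hx i).ge, fun i => by simp [hx i]⟩
    rwa [hpointed] at this
  obtain ⟨g, hg, I, hface⟩ := exists_above_eq_face hsep (hD.isLowerIn_above b)
    (isClosed_above_of_inter_closure hclosed) ⟨0, zero_mem_polyCone, by simpa using hb⟩
  refine ⟨face ℓ I, b + g, isConeFace_face I, hg.2, by simpa using hg.1, ?_⟩
  rw [singleton_add_inter_eq, ← above_above hg.1, hface]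

/-- If the part of `D` above `b ∈ D` is closed, then `b` precedes a closed
cogenerator of `D` along some face `τ`. -/
theorem exists_closed_cogenerator_above {n : ℕ} (C D : Set (Fin n → ℝ))
    (hC : IsPolyCone C) (hpointed : C ∩ (-C) = {0}) (hspan : C - C = Set.univ)
    (hD : IsDownset C D) (b : Fin n → ℝ) (hb : b ∈ D)
    (hclosed : ({b} + C) ∩ D = ({b} + C) ∩ closure D) :
    ∃ (τ : Set (Fin n → ℝ)) (a : Fin n → ℝ), IsConeFace τ C ∧ a ∈ D ∧ a - b ∈ C ∧
      ({a} + C) ∩ D = {a} + τ :=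
  exists_closed_cogenerator_above_general C D hC hpointed hD b hb hclosed
end
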